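/- arXiv:1702.04504 — 4 statements merged into one kernel-verified Lean document; each statement's English description precedes it below -/
import Mathlib

section
/- Let g be a pre-Lie algebra and x, y₁, …, yₙ elements of g. Then ((…(x•y₁)•y₂)•⋯•yₙ) − ((…(y₁•y₂)•⋯•yₙ)•x) = Σ_{j=1}^n (…(y₁•y₂)•⋯•[x,yⱼ])•⋯•yₙ, i.e., the sum over j of the left-iterated product of y₁,…,yₙ with yⱼ replaced by [x,yⱼ] equals the difference of the two iterated products (telescoping identity; ungraded version). -/
/-!
Induct on the number of factors `y₀, …, yₙ`. Appending a factor `y` multiplies both iterated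
products on the right by `y`, while in the sum each old term is multiplied by `y` and one new term
`B • [x, y]` appears, `B` being the old product of the `yᵢ`. After the induction hypothesis, what
remains is `(B • y) • x = (B • x) • y + B • (y • x) - B • (x • y)`, which is the pre-Lie identity
for `(B, x, y)`.
-/

open Function

section LeftFold

variable {M : Type*}

def leftFold (mul : M → M → M) {n : ℕ} (a : M) (y : Fin n → M) : M :=
  (List.ofFn y).foldl mul a

def leftProd (mul : M → M → M) {n : ℕ} (y : Fin (n + 1) → M) : M :=
  leftFold mul (y 0) (Fin.tail y)

theorem leftFold_one (mul : M → M → M) (a : M) (y : Fin 1 → M) :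
    leftFold mul a y = mul a (y 0) := by
  simp [leftFold]

theorem leftProd_zero (mul : M → M → M) (y : Fin 1 → M) : leftProd mul y = y 0 := by
  simp [leftProd, leftFold]

theorem leftFold_eq_init (mul : M → M → M) {n : ℕ} (a : M) (y : Fin (n + 1) → M) :
    leftFold mul a y = mul (leftFold mul a (Fin.init y)) (y (Fin.last n)) := by
  rw [leftFold, List.ofFn_succ', List.concat_eq_append, List.foldl_concat]
  rfl

theorem leftProd_eq_init (mul : M → M → M) {n : ℕ} (y : Fin (n + 2) → M) :
    leftProd mul y = mul (leftProd mul (Fin.init y)) (y (Fin.last (n + 1))) := by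
  rw [leftProd, leftFold_eq_init, leftProd, Fin.tail_init_eq_init_tail]
  rfl

end LeftFold

theorem sum_leftProd_update_eq_init {R M : Type*} [CommSemiring R] [AddCommMonoid M]
    [Module R M] (b : M →ₗ[R] M →ₗ[R] M) (f : M → M) {n : ℕ} (y : Fin (n + 2) → M) :
    ∑ j, leftProd (fun p q => b p q) (update y j (f (y j)))
      = b (∑ j, leftProd (fun p q => b p q) (update (Fin.init y) j (f (Fin.init y j))))
          (y (Fin.last (n + 1)))
        + b (leftProd (fun p q => b p q) (Fin.init y)) (f (y (Fin.last (n + 1)))) := by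
  rw [Fin.sum_univ_castSucc (n := n + 1), map_sum, LinearMap.sum_apply]
  simp only [leftProd_eq_init, Fin.init_update_castSucc, Fin.init_update_last, update_self]
  congr 1
  refine Finset.sum_congr rfl fun j _ => ?_
  rw [update_of_ne (Fin.castSucc_lt_last j).ne']
  rfl

/-- Telescoping identity in a pre-Lie algebra (ungraded version):
`((…(x•y₁)•y₂)•⋯•yₙ) − ((…(y₁•y₂)•⋯•yₙ)•x) = Σⱼ (…(y₁•…•[x,yⱼ])•…•yₙ)`,
where products are iterated to the left and `[x,y] = x•y − y•x`. -/
theorem preLie_telescoping {G : Type*} [AddCommGroup G] [Module ℚ G]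
    (b : G →ₗ[ℚ] G →ₗ[ℚ] G)
    (hpl : ∀ x y z : G, b x (b y z) - b (b x y) z = b x (b z y) - b (b x z) y) :
    ∀ (n : ℕ) (x : G) (y : Fin (n + 1) → G),
      (List.ofFn y).foldl (fun p q => b p q) x
        - b ((List.ofFn fun i : Fin n => y i.succ).foldl (fun p q => b p q) (y 0)) x
      = ∑ j : Fin (n + 1),
          (List.ofFn fun i : Fin n =>
              Function.update y j (b x (y j) - b (y j) x) i.succ).foldl
            (fun p q => b p q)
            (Function.update y j (b x (y j) - b (y j) x) 0) := by
  intro n x y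
  change leftFold (fun p q => b p q) x y - b (leftProd (fun p q => b p q) y) x
    = ∑ j, leftProd (fun p q => b p q) (update y j ((fun z => b x z - b z x) (y j)))
  induction n with
  | zero => simp [leftFold_one, leftProd_zero]
  | succ n ih =>
    rw [sum_leftProd_update_eq_init b (fun z => b x z - b z x), ← ih, leftFold_eq_init,
      leftProd_eq_init]
    have preLie := hpl (leftProd (fun p q => b p q) (Fin.init y)) x (y (Fin.last (n + 1)))
    simp only [map_sub, LinearMap.sub_apply] at preLie ⊢
    linear_combination (norm := abel) -preLie
end

section
/- Let g be a pro-nilpotent pre-Lie algebra (concentrated in degree 0, complete filtered). Then the action of the exponential group Exp(g) on the set g, given by β·exp(x) = β + Σ_{j≥1}(1/j!)((⋯(β•x)•⋯)•x) + e_x where e_x = Σ_{j≥1} x^{•j}/j!, is free and transitive. -/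
/-- `rIter b x k a` is the `k`-fold right pre-Lie multiplication of `a` by `x`:
`((…(a•x)•x)…)•x`. -/
def rIter {G : Type*} (b : G → G → G) (x : G) : ℕ → G → G
  | 0, a => a
  | k + 1, a => b (rIter b x k a) x

/-- `actExp b N β x = β + Σ_{j=1}^{N} (1/j!)((…(β•x)…)•x + x^{•j})`, the (truncated,
exact by nilpotence) formula for the action `β·exp(x)` of the exponential group of a
pro-nilpotent pre-Lie algebra on itself. -/
def actExp {G : Type*} [AddCommGroup G] [Module ℚ G] (b : G → G → G) (N : ℕ)
    (β x : G) : G :=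
  β + ∑ j ∈ Finset.range N,
    ((Nat.factorial (j + 1) : ℚ))⁻¹ • (rIter b x (j + 1) β + rIter b x j x)

/-!
Write `D` for a decreasing filtration with `D 1 = g`, `D i • D j ⊆ D (i + j)` and `D N = 0`.
If `x - y ∈ D k`, then `β·exp(x) - β·exp(y) ≡ x - y` modulo `D (k + 1)`: every term of the
series other than the linear term `x` contains at least one further factor from `D 1`.
A map that is the identity modulo one step of a finite filtration is bijective: it is
injective since `f x = f y` pushes `x - y` one step deeper at a time, and `f x = γ` is
solved by iterating `x ↦ x + (γ - f x)`, whose successive differences go one step deeper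
each time and hence vanish after `N` steps.
-/

open Function

section UnipotentMap

variable {G S : Type*} [AddCommGroup G] [SetLike S G] [AddSubgroupClass S G]
  {D : ℕ → S} {f : G → G} {N : ℕ}

theorem injective_of_sub_sub_mem_succ (h0 : ∀ x, x ∈ D 0) (hN : ∀ x ∈ D N, x = 0)
    (hf : ∀ k x y, x - y ∈ D k → f x - f y - (x - y) ∈ D (k + 1)) : Injective f := by
  intro x y hxy
  have hmem : ∀ k, x - y ∈ D k := by
    intro k
    induction k with
    | zero => exact h0 _
    | succ k ih =>
      have h := neg_mem (hf k x y ih)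
      rwa [hxy, sub_self, zero_sub, neg_neg] at h
  exact sub_eq_zero.mp (hN _ (hmem N))

theorem surjective_of_sub_sub_mem_succ (h0 : ∀ x, x ∈ D 0) (hN : ∀ x ∈ D N, x = 0)
    (hf : ∀ k x y, x - y ∈ D k → f x - f y - (x - y) ∈ D (k + 1)) : Surjective f := by
  intro γ
  obtain ⟨T, hT⟩ : ∃ T : G → G, ∀ x, T x = x + (γ - f x) := ⟨_, fun _ => rfl⟩
  have hTmem : ∀ k u v, u - v ∈ D k → T u - T v ∈ D (k + 1) := fun k u v huv => by
    convert neg_mem (hf k u v huv) using 1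
    rw [hT, hT]
    abel
  have hstep : ∀ n, T^[n + 1] 0 - T^[n] 0 ∈ D n := by
    intro n
    induction n with
    | zero => exact h0 _
    | succ n ih =>
      have h := hTmem n _ _ ih
      rwa [← iterate_succ_apply' T (n + 1), ← iterate_succ_apply' T n] at h
  have hfix : T (T^[N] 0) = T^[N] 0 := by
    rw [← iterate_succ_apply' T N]
    exact sub_eq_zero.mp (hN _ (hstep N))
  rw [hT, add_eq_left, sub_eq_zero] at hfix
  exact ⟨T^[N] 0, hfix.symm⟩

theorem bijective_of_sub_sub_mem_succ (h0 : ∀ x, x ∈ D 0) (hN : ∀ x ∈ D N, x = 0)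
    (hf : ∀ k x y, x - y ∈ D k → f x - f y - (x - y) ∈ D (k + 1)) : Bijective f :=
  ⟨injective_of_sub_sub_mem_succ h0 hN hf, surjective_of_sub_sub_mem_succ h0 hN hf⟩

end UnipotentMap

section AntitoneInf

variable {R M : Type*} [Semiring R] [AddCommMonoid M] [Module R M] (F : ℕ → Submodule R M)

/-- `F` itself need not be decreasing; this is the largest decreasing filtration below it
in degrees `≥ 1`. -/
def antitoneInf (k : ℕ) : Submodule R M :=
  ⨅ i ∈ Finset.Icc 1 k, F i

variable {F}

theorem mem_antitoneInf {k : ℕ} {x : M} :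
    x ∈ antitoneInf F k ↔ ∀ i, 1 ≤ i → i ≤ k → x ∈ F i := by
  simp [antitoneInf, Submodule.mem_iInf, and_imp]

theorem antitone_antitoneInf : Antitone (antitoneInf F) := fun _ _ hkl _ hx =>
  mem_antitoneInf.mpr fun i hi hik => mem_antitoneInf.mp hx i hi (hik.trans hkl)

theorem antitoneInf_le {k : ℕ} (hk : 1 ≤ k) : antitoneInf F k ≤ F k := fun _ hx =>
  mem_antitoneInf.mp hx k hk le_rfl

theorem antitoneInf_one (hF1 : F 1 = ⊤) : antitoneInf F 1 = ⊤ :=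
  top_le_iff.mp fun x _ => mem_antitoneInf.mpr fun i hi hi1 => by
    rw [show i = 1 by omega, hF1]
    trivial

theorem mul_mem_antitoneInf (mul : M → M → M) (hF1 : F 1 = ⊤)
    (hmul : ∀ (i j : ℕ) (x y : M), x ∈ F i → y ∈ F j → mul x y ∈ F (i + j))
    {i j : ℕ} {x y : M} (hx : x ∈ antitoneInf F i) (hy : y ∈ antitoneInf F j) :
    mul x y ∈ antitoneInf F (i + j) := by
  have hF : ∀ z, z ∈ F 1 := fun z => hF1 ▸ Submodule.mem_top
  have hxF : ∀ a, 1 ≤ a → a ≤ max i 1 → x ∈ F a := fun a ha hai =>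
    if h : a ≤ i then mem_antitoneInf.mp hx a ha h else (show a = 1 by omega) ▸ hF x
  have hyF : ∀ a, 1 ≤ a → a ≤ max j 1 → y ∈ F a := fun a ha haj =>
    if h : a ≤ j then mem_antitoneInf.mp hy a ha h else (show a = 1 by omega) ▸ hF y
  refine mem_antitoneInf.mpr fun c hc hcij => ?_
  obtain rfl | hc2 := eq_or_lt_of_le hc
  · exact hF _
  set a := min (max i 1) (c - 1)
  have hmem := hmul a (c - a) x y (hxF a (by omega) (by omega))
    (hyF (c - a) (by omega) (by omega))
  rwa [show a + (c - a) = c by omega] at hmem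

end AntitoneInf

section RightIterates

variable {R G : Type*} [CommRing R] [AddCommGroup G] [Module R G] {b : G →ₗ[R] G →ₗ[R] G}
  {D : ℕ → Submodule R G}

theorem rIter_mem (hD1 : D 1 = ⊤)
    (hmul : ∀ (i j : ℕ) (x y : G), x ∈ D i → y ∈ D j → b x y ∈ D (i + j))
    (x : G) {i : ℕ} {a : G} (ha : a ∈ D i) (m : ℕ) :
    rIter (fun p q => b p q) x m a ∈ D (i + m) := by
  induction m with
  | zero => exact ha
  | succ m ih => exact hmul _ 1 _ x ih (hD1 ▸ Submodule.mem_top)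

theorem rIter_sub_rIter_mem (hD1 : D 1 = ⊤)
    (hmul : ∀ (i j : ℕ) (x y : G), x ∈ D i → y ∈ D j → b x y ∈ D (i + j))
    {k : ℕ} {x y a c : G} (hxy : x - y ∈ D k) (hac : a - c ∈ D k) (m : ℕ) :
    rIter (fun p q => b p q) x m a - rIter (fun p q => b p q) y m c ∈ D (k + m) := by
  induction m with
  | zero => exact hac
  | succ m ih =>
    have hsplit : rIter (fun p q => b p q) x (m + 1) a - rIter (fun p q => b p q) y (m + 1) c
        = b (rIter (fun p q => b p q) x m a - rIter (fun p q => b p q) y m c) x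
          + b (rIter (fun p q => b p q) y m c) (x - y) := by
      simp only [rIter, map_sub, LinearMap.sub_apply]
      abel
    have hyc := rIter_mem hD1 hmul y (hD1 ▸ Submodule.mem_top : c ∈ D 1) m
    rw [hsplit]
    refine add_mem (hmul _ 1 _ x ih (hD1 ▸ Submodule.mem_top)) ?_
    simpa only [show 1 + m + k = k + (m + 1) by omega] using hmul _ _ _ _ hyc hxy

end RightIterates

theorem actExp_sub_actExp_sub_mem {G : Type*} [AddCommGroup G] [Module ℚ G]
    {b : G →ₗ[ℚ] G →ₗ[ℚ] G} {D : ℕ → Submodule ℚ G} (hD : Antitone D) (hD1 : D 1 = ⊤)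
    (hmul : ∀ (i j : ℕ) (x y : G), x ∈ D i → y ∈ D j → b x y ∈ D (i + j))
    {N : ℕ} (hN : 0 < N) (β : G) {k : ℕ} {x y : G} (hxy : x - y ∈ D k) :
    actExp (fun p q => b p q) N β x - actExp (fun p q => b p q) N β y - (x - y)
      ∈ D (k + 1) := by
  obtain ⟨M, rfl⟩ : ∃ M, N = M + 1 := ⟨N - 1, by omega⟩
  have hβ : ∀ j, rIter (fun p q => b p q) x (j + 1) β - rIter (fun p q => b p q) y (j + 1) β
      ∈ D (k + 1) := fun j =>
    hD (by omega) (rIter_sub_rIter_mem hD1 hmul hxy (by simp) (j + 1))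
  have hx : ∀ j, rIter (fun p q => b p q) x (j + 1) x - rIter (fun p q => b p q) y (j + 1) y
      ∈ D (k + 1) := fun j =>
    hD (by omega) (rIter_sub_rIter_mem hD1 hmul hxy hxy (j + 1))
  -- the `j = 0` summand of the series is `β•x + x`; its `x` cancels against `x - y`
  have hexpand : actExp (fun p q => b p q) (M + 1) β x - actExp (fun p q => b p q) (M + 1) β y
      - (x - y) = ∑ j ∈ Finset.range M, ((Nat.factorial (j + 1 + 1) : ℚ))⁻¹ •
          ((rIter (fun p q => b p q) x (j + 1 + 1) β - rIter (fun p q => b p q) y (j + 1 + 1) β)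
            + (rIter (fun p q => b p q) x (j + 1) x - rIter (fun p q => b p q) y (j + 1) y))
        + (rIter (fun p q => b p q) x 1 β - rIter (fun p q => b p q) y 1 β) := by
    simp only [actExp, Finset.sum_range_succ', zero_add, Nat.factorial_one, Nat.cast_one,
      inv_one, one_smul, smul_add, smul_sub, Finset.sum_add_distrib, Finset.sum_sub_distrib]
    simp only [rIter]
    abel
  rw [hexpand]
  exact add_mem
    (Submodule.sum_mem _ fun j _ => Submodule.smul_mem _ _ (add_mem (hβ (j + 1)) (hx j))) (hβ 0)

theorem preLie_exp_action_free_transitive_general {G : Type*} [AddCommGroup G] [Module ℚ G]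
    (b : G →ₗ[ℚ] G →ₗ[ℚ] G)
    (F : ℕ → Submodule ℚ G) (N : ℕ) (hN : 0 < N)
    (hF1 : F 1 = ⊤)
    (hFb : ∀ (i j : ℕ) (x y : G), x ∈ F i → y ∈ F j → b x y ∈ F (i + j))
    (hFN : F N = ⊥) :
    ∀ β γ : G, ∃! x : G, actExp (fun p q => b p q) N β x = γ := by
  intro β γ
  have h0 : ∀ x, x ∈ antitoneInf F 0 := fun x => mem_antitoneInf.mpr fun i hi hi0 => by omega
  have hbot : ∀ x ∈ antitoneInf F N, x = 0 := fun x hx => by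
    simpa [hFN] using antitoneInf_le hN hx
  have hunip := fun k x y (hxy : x - y ∈ antitoneInf F k) =>
    actExp_sub_actExp_sub_mem antitone_antitoneInf (antitoneInf_one hF1)
      (fun _ _ _ _ => mul_mem_antitoneInf (fun p q => b p q) hF1 hFb) hN β hxy
  exact (bijective_of_sub_sub_mem_succ h0 hbot hunip).existsUnique γ

/-- In a pro-nilpotent pre-Lie algebra `g` (complete filtered with `g = F¹g`; modelled
here by a filtration `F` with `F 1 = ⊤`, `F i • F j ⊆ F (i+j)` and `F N = ⊥`), the action
`β·exp(x) = β + Σ_{j≥1}(1/j!)((⋯(β•x)•⋯)•x) + e_x` of the exponential group `Exp(g)` on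
the set `g` is free and transitive: for all `β γ` there is a unique `x` with
`β·exp(x) = γ`. -/
theorem preLie_exp_action_free_transitive {G : Type*} [AddCommGroup G] [Module ℚ G]
    (b : G →ₗ[ℚ] G →ₗ[ℚ] G)
    (hpl : ∀ x y z : G, b x (b y z) - b (b x y) z = b x (b z y) - b (b x z) y)
    (F : ℕ → Submodule ℚ G) (N : ℕ) (hN : 0 < N)
    (hF1 : F 1 = ⊤)
    (hFb : ∀ (i j : ℕ) (x y : G), x ∈ F i → y ∈ F j → b x y ∈ F (i + j))
    (hFN : F N = ⊥) :
    ∀ β γ : G, ∃! x : G, actExp (fun p q => b p q) N β x = γ :=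
  preLie_exp_action_free_transitive_general b F N hN hF1 hFb hFN
end

section
/- In a pro-nilpotent pre-Lie algebra g concentrated in degree 0, the map β ↦ e_β = Σ_{r≥1} β^{•r}/r! (left-iterated pre-Lie powers) is a bijection from g to itself. -/
/-- `eExp b N β = Σ_{r=1}^{N} β^{•r}/r!` (left-iterated pre-Lie powers), the pre-Lie
exponential, truncated at `N` (exact by nilpotence). -/
def eExp {G : Type*} [AddCommGroup G] [Module ℚ G] (b : G → G → G) (N : ℕ) (β : G) : G :=
  ∑ j ∈ Finset.range N, ((Nat.factorial (j + 1) : ℚ))⁻¹ • rIter b β j β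

/-!
Since `g = F¹g`, every product raises the filtration degree, so `e_β = β + (products of at
least two factors β)`, and `e_x - e_y - (x - y)` lies one filtration step deeper than `x - y`.
Such a perturbation of the identity on a nilpotent filtration is bijective: injectivity by
pushing `x - y` down the filtration, surjectivity by the iteration `x ↦ x + (γ - e_x)`, whose
defect `γ - e_x` gains one filtration degree per step.
-/

theorem Function.bijective_of_sub_sub_mem_succ {G : Type*} [AddCommGroup G]
    (C : ℕ → AddSubgroup G) (M : ℕ) (hC0 : C 0 = ⊤) (hCM : C M = ⊥) (f : G → G)
    (hf : ∀ k x y, x - y ∈ C k → f x - f y - (x - y) ∈ C (k + 1)) :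
    Function.Bijective f := by
  constructor
  · intro x y hxy
    have hmem : ∀ k, x - y ∈ C k := by
      intro k
      induction k with
      | zero => simp [hC0]
      | succ k ih =>
        have h := hf k x y ih
        rwa [hxy, sub_self, zero_sub, neg_mem_iff] at h
    simpa [hCM, sub_eq_zero] using hmem M
  · intro γ
    set step : G → G := fun x => x + (γ - f x)
    have hdefect : ∀ n, γ - f (step^[n] 0) ∈ C n := by
      intro n
      induction n with
      | zero => simp [hC0]
      | succ n ih =>
        rw [Function.iterate_succ_apply']
        set x := step^[n] 0
        have h := hf n (step x) x (by simpa [step] using ih)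
        have hneg : γ - f (step x) = -(f (step x) - f x - (step x - x)) := by
          simp only [step]; abel
        rw [hneg]
        exact neg_mem h
    have h := hdefect M
    rw [hCM, AddSubgroup.mem_bot, sub_eq_zero] at h
    exact ⟨step^[M] 0, h.symm⟩

section Filtration

variable {R G : Type*} [CommRing R] [AddCommGroup G] [Module R G]

/-- `D k` models `F^{k+1} g`: a decreasing filtration of the whole algebra in which every
product raises the index by one. -/
structure IsShiftedFiltration (b : G →ₗ[R] G →ₗ[R] G) (D : ℕ → Submodule R G) : Prop where
  antitone : Antitone D
  zero_eq_top : D 0 = ⊤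
  mul_mem : ∀ {i j : ℕ} {x y : G}, x ∈ D i → y ∈ D j → b x y ∈ D (i + j + 1)

variable {b : G →ₗ[R] G →ₗ[R] G} {D : ℕ → Submodule R G}

namespace IsShiftedFiltration

theorem mem_zero (hD : IsShiftedFiltration b D) (x : G) : x ∈ D 0 := by
  simp [hD.zero_eq_top]

theorem rIter_mem (hD : IsShiftedFiltration b D) (x : G) {i : ℕ} {a : G} (ha : a ∈ D i) :
    ∀ j, rIter (fun p q => b p q) x j a ∈ D (i + j)
  | 0 => ha
  | j + 1 => by simpa [rIter, add_assoc] using hD.mul_mem (hD.rIter_mem x ha j) (hD.mem_zero x)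

theorem rIter_self_sub_rIter_self_mem (hD : IsShiftedFiltration b D) {k : ℕ} {x y : G}
    (hxy : x - y ∈ D k) :
    ∀ j, rIter (fun p q => b p q) x j x - rIter (fun p q => b p q) y j y ∈ D (k + j)
  | 0 => hxy
  | j + 1 => by
    have hsplit : rIter (fun p q => b p q) x (j + 1) x - rIter (fun p q => b p q) y (j + 1) y
        = b (rIter (fun p q => b p q) x j x - rIter (fun p q => b p q) y j y) x
          + b (rIter (fun p q => b p q) y j y) (x - y) := by
      simp only [rIter, map_sub, LinearMap.sub_apply]
      abel
    have hleft := hD.mul_mem (hD.rIter_self_sub_rIter_self_mem hxy j) (hD.mem_zero x)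
    have hright := hD.mul_mem (hD.rIter_mem y (hD.mem_zero y) j) hxy
    rw [hsplit]
    refine add_mem hleft ?_
    convert hright using 2
    omega

end IsShiftedFiltration

end Filtration

section Exponential

variable {G : Type*} [AddCommGroup G] [Module ℚ G]

theorem eExp_succ (b : G → G → G) (M : ℕ) (x : G) :
    eExp b (M + 1) x
      = x + ∑ j ∈ Finset.range M, ((Nat.factorial (j + 2) : ℚ))⁻¹ • rIter b x (j + 1) x := by
  rw [eExp, Finset.sum_range_succ', add_comm]
  simp [rIter]

theorem IsShiftedFiltration.eExp_sub_sub_mem {b : G →ₗ[ℚ] G →ₗ[ℚ] G} {D : ℕ → Submodule ℚ G}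
    (hD : IsShiftedFiltration b D) (M : ℕ) {k : ℕ} {x y : G} (hxy : x - y ∈ D k) :
    eExp (fun p q => b p q) (M + 1) x - eExp (fun p q => b p q) (M + 1) y - (x - y)
      ∈ D (k + 1) := by
  rw [eExp_succ, eExp_succ, add_sub_add_comm, add_sub_cancel_left, ← Finset.sum_sub_distrib]
  refine Submodule.sum_mem _ fun j _ => ?_
  rw [← smul_sub]
  exact Submodule.smul_mem _ _
    (hD.antitone (by omega) (hD.rIter_self_sub_rIter_self_mem hxy (j + 1)))

end Exponential

section Cumulative

variable {R G : Type*} [CommRing R] [AddCommGroup G] [Module R G]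

/-- `F` itself need not be decreasing; this is the largest decreasing filtration below
`k ↦ F (k + 1)`. -/
def cumulativeFiltration (F : ℕ → Submodule R G) (k : ℕ) : Submodule R G :=
  ⨅ (m : ℕ) (_ : m ≤ k), F (m + 1)

theorem mem_cumulativeFiltration {F : ℕ → Submodule R G} {k : ℕ} {x : G} :
    x ∈ cumulativeFiltration F k ↔ ∀ m ≤ k, x ∈ F (m + 1) := by
  simp [cumulativeFiltration, Submodule.mem_iInf]

theorem cumulativeFiltration_le (F : ℕ → Submodule R G) (k : ℕ) :
    cumulativeFiltration F k ≤ F (k + 1) :=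
  fun _ hx => mem_cumulativeFiltration.1 hx k le_rfl

theorem isShiftedFiltration_cumulativeFiltration {b : G →ₗ[R] G →ₗ[R] G}
    {F : ℕ → Submodule R G} (hF1 : F 1 = ⊤)
    (hFb : ∀ (i j : ℕ) (x y : G), x ∈ F i → y ∈ F j → b x y ∈ F (i + j)) :
    IsShiftedFiltration b (cumulativeFiltration F) where
  antitone _ _ hkl _ hx :=
    mem_cumulativeFiltration.2 fun m hm => mem_cumulativeFiltration.1 hx m (hm.trans hkl)
  zero_eq_top := by
    ext x
    simp [mem_cumulativeFiltration, hF1]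
  mul_mem {i j x y} hx hy := by
    rw [mem_cumulativeFiltration] at hx hy ⊢
    intro m hm
    rcases m with _ | m
    · simp [hF1]
    -- split `m + 2 = (p + 1) + (q + 1)` with `p ≤ i`, `q ≤ j`
    have h := hFb _ _ x y (hx (min i m) (min_le_left _ _)) (hy (m - min i m) (by omega))
    convert h using 2
    omega

end Cumulative

theorem preLie_exponential_bijective_general {G : Type*} [AddCommGroup G] [Module ℚ G]
    (b : G →ₗ[ℚ] G →ₗ[ℚ] G)
    (F : ℕ → Submodule ℚ G) (N : ℕ) (hN : 0 < N)
    (hF1 : F 1 = ⊤)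
    (hFb : ∀ (i j : ℕ) (x y : G), x ∈ F i → y ∈ F j → b x y ∈ F (i + j))
    (hFN : F N = ⊥) :
    Function.Bijective (fun β : G => eExp (fun p q => b p q) N β) := by
  obtain ⟨M, rfl⟩ : ∃ M, N = M + 1 := ⟨N - 1, by omega⟩
  have hD := isShiftedFiltration_cumulativeFiltration hF1 hFb
  have hDM : cumulativeFiltration F M = ⊥ := eq_bot_iff.2 (hFN ▸ cumulativeFiltration_le F M)
  exact Function.bijective_of_sub_sub_mem_succ (fun k => (cumulativeFiltration F k).toAddSubgroup)
    M (by simp [hD.zero_eq_top]) (by simp [hDM]) _ fun k x y hxy => hD.eExp_sub_sub_mem M hxy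

/-- In a pro-nilpotent pre-Lie algebra `g` (complete filtered, `g = F¹g`, modelled here by
a filtration `F` with `F 1 = ⊤`, `F i • F j ⊆ F (i+j)` and `F N = ⊥`), the pre-Lie
exponential `β ↦ e_β = Σ_{r≥1} β^{•r}/r!` is a bijection from `g` to itself. -/
theorem preLie_exponential_bijective {G : Type*} [AddCommGroup G] [Module ℚ G]
    (b : G →ₗ[ℚ] G →ₗ[ℚ] G)
    (hpl : ∀ x y z : G, b x (b y z) - b (b x y) z = b x (b z y) - b (b x z) y)
    (F : ℕ → Submodule ℚ G) (N : ℕ) (hN : 0 < N)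
    (hF1 : F 1 = ⊤)
    (hFb : ∀ (i j : ℕ) (x y : G), x ∈ F i → y ∈ F j → b x y ∈ F (i + j))
    (hFN : F N = ⊥) :
    Function.Bijective (fun β : G => eExp (fun p q => b p q) N β) :=
  preLie_exponential_bijective_general b F N hN hF1 hFb hFN
end

section
/- Let M be a pro-nilpotent dg Lie algebra with a compatible right action of a pre-Lie algebra g, and let α ∈ g and m ∈ M^α be Maurer-Cartan elements. For x ∈ g of degree 0 with dx + [α,x] = 0, and m' a Maurer-Cartan element of M^{α,m}, the element m'·x := m∘x + m'∘x satisfies d_{m'}(m'·x) = 0, where d_{m'} = d(−) + (−)∘α + [m + m', −] is the tangent differential at m'; that is, the infinitesimal action preserves the set of Maurer-Cartan elements of M^{α,m} to first order. -/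
/-- The Koszul sign `(−1)^{pq}` for degrees `p q : ℤ`, as a rational number. -/
def koszul (p q : ℤ) : ℚ := (-1) ^ (p * q).natAbs

/-- Gauge action infinitesimal compatibility.  For a pre-Lie pair `(g, M)` with `M` a
dg Lie algebra, `α ∈ g` and `m ∈ M^α` Maurer–Cartan, `x ∈ g` of degree `0` closed in
`g^α` (i.e. `dx + [α,x] = 0`), and `m'` a Maurer–Cartan element of `M^{α,m}`, the element
`m'·x := m∘x + m'∘x` satisfies the linearized Maurer–Cartan equation at `m'`:
`d(m'·x) + (m'·x)∘α + [m + m', m'·x] = 0`. -/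
theorem gauge_action_infinitesimal {G M : Type*}
    [AddCommGroup G] [Module ℚ G] [AddCommGroup M] [Module ℚ M]
    (b : G →ₗ[ℚ] G →ₗ[ℚ] G) (HG : ℤ → Submodule ℚ G) (HM : ℤ → Submodule ℚ M)
    (hgrb : ∀ (i j : ℤ) (x y : G), x ∈ HG i → y ∈ HG j → b x y ∈ HG (i + j))
    (hpl : ∀ (i j k : ℤ) (x y z : G), x ∈ HG i → y ∈ HG j → z ∈ HG k →
      b x (b y z) - b (b x y) z = koszul j k • (b x (b z y) - b (b x z) y))
    (dG : G →ₗ[ℚ] G)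
    (hdGdeg : ∀ (i : ℤ) (x : G), x ∈ HG i → dG x ∈ HG (i - 1))
    (hdG2 : ∀ x : G, dG (dG x) = 0)
    (hdGleib : ∀ (i : ℤ) (x y : G), x ∈ HG i →
      dG (b x y) = b (dG x) y + ((-1 : ℚ) ^ i.natAbs) • b x (dG y))
    (lM : M →ₗ[ℚ] M →ₗ[ℚ] M) (dM : M →ₗ[ℚ] M)
    (hgrl : ∀ (p q : ℤ) (u v : M), u ∈ HM p → v ∈ HM q → lM u v ∈ HM (p + q))
    (hdMdeg : ∀ (p : ℤ) (u : M), u ∈ HM p → dM u ∈ HM (p - 1))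
    (hdM2 : ∀ u : M, dM (dM u) = 0)
    (hanti : ∀ (p q : ℤ) (u v : M), u ∈ HM p → v ∈ HM q →
      lM u v = -(koszul p q • lM v u))
    (hjac : ∀ (p q : ℤ) (u v w : M), u ∈ HM p → v ∈ HM q →
      lM u (lM v w) = lM (lM u v) w + koszul p q • lM v (lM u w))
    (hdMleib : ∀ (p : ℤ) (u v : M), u ∈ HM p →
      dM (lM u v) = lM (dM u) v + ((-1 : ℚ) ^ p.natAbs) • lM u (dM v))
    (a : M →ₗ[ℚ] G →ₗ[ℚ] M)
    (hgra : ∀ (p i : ℤ) (u : M) (x : G), u ∈ HM p → x ∈ HG i → a u x ∈ HM (p + i))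
    (hmod : ∀ (p i j : ℤ) (u : M) (x y : G), u ∈ HM p → x ∈ HG i → y ∈ HG j →
      a u (b x y) - a (a u x) y = koszul i j • (a u (b y x) - a (a u y) x))
    (haleib : ∀ (p : ℤ) (u : M) (x : G), u ∈ HM p →
      dM (a u x) = a (dM u) x + ((-1 : ℚ) ^ p.natAbs) • a u (dG x))
    (hcomp : ∀ (p q i : ℤ) (u v : M) (x : G), u ∈ HM p → v ∈ HM q → x ∈ HG i →
      a (lM u v) x = koszul i q • lM (a u x) v + lM u (a v x))
    (α : G) (hα : α ∈ HG (-1)) (hmcα : dG α + b α α = 0)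
    (m : M) (hm : m ∈ HM (-1)) (hmcm : dM m + a m α + (2 : ℚ)⁻¹ • lM m m = 0)
    (m' : M) (hm' : m' ∈ HM (-1))
    (hmcm' : dM m' + a m' α + lM m m' + (2 : ℚ)⁻¹ • lM m' m' = 0)
    (x : G) (hx : x ∈ HG 0) (hxcl : dG x + b α x - b x α = 0) :
    dM (a m x + a m' x) + a (a m x + a m' x) α
      + lM (m + m') (a m x + a m' x) = 0 := by
  set μ := m + m' with hμdef
  have hμ : μ ∈ HM (-1) := Submodule.add_mem _ hm hm'
  have haμx : a μ x ∈ HM (-1) := by simpa using hgra (-1) 0 μ x hμ hx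
  -- m + m' is Maurer-Cartan in M^α
  have hsym : lM m m' = lM m' m := by
    have h := hanti (-1) (-1) m m' hm hm'
    have : koszul (-1) (-1) = -1 := by norm_num [koszul]
    rw [this] at h
    simpa using h
  have hmcμ : dM μ + a μ α + (2 : ℚ)⁻¹ • lM μ μ = 0 := by
    have hexp : dM μ + a μ α + (2 : ℚ)⁻¹ • lM μ μ =
        (dM m + a m α + (2 : ℚ)⁻¹ • lM m m)
        + (dM m' + a m' α + lM m m' + (2 : ℚ)⁻¹ • lM m' m') := by
      simp only [hμdef, map_add, LinearMap.add_apply, smul_add]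
      rw [hsym]
      module
    rw [hexp, hmcm, hmcm', add_zero]
  have hgoal : a m x + a m' x = a μ x := by
    simp [hμdef, map_add]
  rw [hgoal]
  -- key equations
  have E1 : dM (a μ x) = a (dM μ) x - a μ (dG x) := by
    have h := haleib (-1) μ x hμ
    simpa [sub_eq_add_neg] using h
  have E2 : a μ (dG x) = a μ (b x α) - a μ (b α x) := by
    have h4 : dG x = b x α - b α x := by
      linear_combination (norm := module) hxcl
    rw [h4, map_sub]
  have E3 : a μ (b x α) - a (a μ x) α = a μ (b α x) - a (a μ α) x := by
    have h := hmod (-1) 0 (-1) μ x α hμ hx hα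
    have hk : koszul 0 (-1) = 1 := by norm_num [koszul]
    rw [hk, one_smul] at h
    exact h
  have E4 : a (lM μ μ) x = lM (a μ x) μ + lM μ (a μ x) := by
    have h := hcomp (-1) (-1) 0 μ μ x hμ hμ hx
    have hk : koszul 0 (-1) = 1 := by norm_num [koszul]
    rw [hk, one_smul] at h
    exact h
  have E5 : lM (a μ x) μ = lM μ (a μ x) := by
    have h := hanti (-1) (-1) (a μ x) μ haμx hμ
    have hk : koszul (-1) (-1) = -1 := by norm_num [koszul]
    rw [hk] at h
    simpa using h
  have E6 : a (dM μ) x + a (a μ α) x = -((2 : ℚ)⁻¹ • a (lM μ μ) x) := by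
    have h : dM μ + a μ α = -((2 : ℚ)⁻¹ • lM μ μ) := by
      linear_combination (norm := module) hmcμ
    have := congrArg (fun u => a u x) h
    simpa [map_add, map_neg, map_smul] using this
  linear_combination (norm := module) E1 - E2 - E3 + E6
    - (2 : ℚ)⁻¹ • E4 - (2 : ℚ)⁻¹ • E5
end
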